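/- arXiv:1002.1527 — 2 statements merged into one kernel-verified Lean document; each statement's English description precedes it below -/
import Mathlib

section
/- For any integer k ≤ 0 and any smooth function h : ℍ → ℂ, the operator identity D^{1−k} h = (−4π)^{k−1} R_k^{1−k} h holds, where D = (1/(2πi)) d/dτ acting on holomorphic functions extends to ∂/∂τ scaled by 1/(2πi), and R_k^{1−k} = R_{k+2(−k)} ∘ ⋯ ∘ R_{k+2} ∘ R_k is the (1−k)-fold iterated Maass raising operator with R_ℓ = 2i ∂/∂τ + ℓ y^{−1}. -/
open Complex Real

/-- The Wirtinger derivative `∂/∂τ = (1/2)(∂/∂x − i ∂/∂y)` of a function on `ℂ`. -/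
noncomputable def dtau (f : ℂ → ℂ) (z : ℂ) : ℂ :=
  (1 / 2 : ℂ) * (fderiv ℝ f z 1 - Complex.I * fderiv ℝ f z Complex.I)

/-- The operator `D = (1/(2πi)) ∂/∂τ`. -/
noncomputable def Dop (f : ℂ → ℂ) (z : ℂ) : ℂ :=
  (1 / (2 * (π : ℂ) * Complex.I)) * dtau f z

/-- The Maass raising operator `R_ℓ = 2i ∂/∂τ + ℓ y⁻¹` of weight `ℓ`. -/
noncomputable def raise (ℓ : ℤ) (f : ℂ → ℂ) (z : ℂ) : ℂ :=
  2 * Complex.I * dtau f z + (ℓ : ℂ) * (z.im : ℂ)⁻¹ * f z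

/-- The `n`-fold iterated raising operator
`R_k^n = R_{k+2(n−1)} ∘ ⋯ ∘ R_{k+2} ∘ R_k`. -/
noncomputable def raiseIter (k : ℤ) : ℕ → (ℂ → ℂ) → (ℂ → ℂ)
  | 0, f => f
  | n + 1, f => raise (k + 2 * n) (raiseIter k n f)


lemma dtau_congr {f g : ℂ → ℂ} {z : ℂ} (h : f =ᶠ[nhds z] g) : dtau f z = dtau g z := by
  unfold dtau; rw [h.fderiv_eq]

lemma dtau_add {f g : ℂ → ℂ} {z : ℂ} (hf : DifferentiableAt ℝ f z)
    (hg : DifferentiableAt ℝ g z) :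
    dtau (fun w => f w + g w) z = dtau f z + dtau g z := by
  unfold dtau; rw [fderiv_fun_add hf hg]; simp; ring

lemma dtau_mul {f g : ℂ → ℂ} {z : ℂ} (hf : DifferentiableAt ℝ f z)
    (hg : DifferentiableAt ℝ g z) :
    dtau (fun w => f w * g w) z = dtau f z * g z + f z * dtau g z := by
  unfold dtau; rw [fderiv_fun_mul hf hg]; simp [Complex.real_smul, smul_eq_mul]; ring

lemma dtau_const_mul {g : ℂ → ℂ} {z : ℂ} (a : ℂ) (hg : DifferentiableAt ℝ g z) :
    dtau (fun w => a * g w) z = a * dtau g z := by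
  unfold dtau; rw [fderiv_const_mul hg]; simp; ring

lemma dtau_sum {ι : Type*} {s : Finset ι} {A : ι → ℂ → ℂ} {z : ℂ}
    (h : ∀ i ∈ s, DifferentiableAt ℝ (A i) z) :
    dtau (fun w => ∑ i ∈ s, A i w) z = ∑ i ∈ s, dtau (A i) z := by
  unfold dtau; rw [fderiv_fun_sum h]; simp [Finset.mul_sum, ← Finset.sum_sub_distrib]

lemma hasDerivAt_invpow (s : ℕ) {x : ℝ} (hx : x ≠ 0) :
    HasDerivAt (fun t : ℝ => ((t:ℂ))⁻¹ ^ s) (-(s:ℂ) * ((x:ℂ))⁻¹ ^ (s+1)) x := by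
  have hx' : (x:ℂ) ≠ 0 := by exact_mod_cast hx
  have h1 : HasDerivAt (fun c : ℂ => c⁻¹ ^ s)
      ((s:ℂ) * ((x:ℂ)⁻¹) ^ (s-1) * (-((x:ℂ)^2)⁻¹)) (x:ℂ) := (hasDerivAt_inv hx').pow s
  have h2 := h1.comp_ofReal
  convert h2 using 1
  rcases Nat.eq_zero_or_pos s with h | h
  · simp [h]
  · have e : s - 1 + 2 = s + 1 := by omega
    rw [← e, pow_add, inv_pow ((x:ℂ)) 2]
    ring

lemma hasFDerivAt_invpow (s : ℕ) {z : ℂ} (hz : z.im ≠ 0) :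
    HasFDerivAt (fun w : ℂ => ((w.im:ℂ))⁻¹ ^ s)
      (((1 : ℝ →L[ℝ] ℝ).smulRight (-(s:ℂ) * ((z.im:ℂ))⁻¹ ^ (s+1))).comp Complex.imCLM) z := by
  have hg := (hasDerivAt_invpow s hz).hasFDerivAt
  have him : HasFDerivAt Complex.im Complex.imCLM z := Complex.imCLM.hasFDerivAt
  exact hg.comp z him

lemma differentiableAt_invpow (s : ℕ) {z : ℂ} (hz : z.im ≠ 0) :
    DifferentiableAt ℝ (fun w : ℂ => ((w.im:ℂ))⁻¹ ^ s) z :=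
  (hasFDerivAt_invpow s hz).differentiableAt

lemma dtau_invpow (s : ℕ) {z : ℂ} (hz : z.im ≠ 0) :
    dtau (fun w => ((w.im:ℂ))⁻¹ ^ s) z
      = Complex.I * (s:ℂ) / 2 * ((z.im:ℂ))⁻¹ ^ (s+1) := by
  unfold dtau
  rw [(hasFDerivAt_invpow s hz).fderiv]
  simp [Complex.real_smul]
  ring

noncomputable def dd (f : ℂ → ℂ) : ℂ → ℂ := fun z => 2 * Complex.I * dtau f z

lemma contDiff_dtau {f : ℂ → ℂ} (hf : ContDiff ℝ (⊤ : ℕ∞) f) : ContDiff ℝ (⊤ : ℕ∞) (dtau f) := by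
  unfold dtau
  have h1 : ContDiff ℝ (⊤ : ℕ∞) (fderiv ℝ f) := hf.fderiv_right le_rfl
  exact contDiff_const.mul ((h1.clm_apply contDiff_const).sub
    (contDiff_const.mul (h1.clm_apply contDiff_const)))

lemma contDiff_dd {f : ℂ → ℂ} (hf : ContDiff ℝ (⊤ : ℕ∞) f) : ContDiff ℝ (⊤ : ℕ∞) (dd f) :=
  contDiff_const.mul (contDiff_dtau hf)

lemma contDiff_dd_iter {f : ℂ → ℂ} (hf : ContDiff ℝ (⊤ : ℕ∞) f) (n : ℕ) :
    ContDiff ℝ (⊤ : ℕ∞) (dd^[n] f) := by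
  induction n with
  | zero => exact hf
  | succ n ih => rw [Function.iterate_succ_apply']; exact contDiff_dd ih

noncomputable def Co (k : ℤ) (n r : ℕ) : ℂ :=
  (n.choose r : ℂ) * ∏ j ∈ Finset.Ico r n, ((k : ℂ) + j)

lemma Co_self (k : ℤ) (n : ℕ) : Co k n n = 1 := by simp [Co]

lemma Co_rec_zero (k : ℤ) (n : ℕ) : Co k (n+1) 0 = ((k:ℂ) + n) * Co k n 0 := by
  simp only [Co, Nat.choose_zero_right, Nat.cast_one, one_mul]
  rw [Finset.prod_Ico_succ_top (Nat.zero_le n)]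
  ring

lemma choose_aux (n r : ℕ) :
    ((n+1).choose (r+1) : ℂ) * ((k':ℂ) + n) = (n.choose r : ℂ) * ((k':ℂ) + r)
      + ((k':ℂ) + n + r + 1) * (n.choose (r+1) : ℂ) := by
  have pascal : (n+1).choose (r+1) = n.choose r + n.choose (r+1) := Nat.choose_succ_succ n r
  have key : n * ((n+1).choose (r+1)) = r * (n.choose r) + (n + r + 1) * (n.choose (r+1)) := by
    have h1 : n.choose (r+1) * (r+1) = n.choose r * (n - r) := Nat.choose_succ_right_eq n r
    rcases le_or_gt r n with h | h
    · rw [pascal]; nlinarith [Nat.sub_add_cancel h]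
    · have : n.choose r = 0 := Nat.choose_eq_zero_of_lt h
      have h2 : n.choose (r+1) = 0 := Nat.choose_eq_zero_of_lt (by omega)
      rw [pascal, this, h2]; ring
  have pascal' : ((n+1).choose (r+1) : ℂ) = (n.choose r : ℂ) + (n.choose (r+1) : ℂ) := by
    exact_mod_cast congrArg (Nat.cast : ℕ → ℂ) pascal
  have key' : (n:ℂ) * ((n+1).choose (r+1) : ℂ)
      = (r:ℂ) * (n.choose r : ℂ) + ((n:ℂ) + r + 1) * (n.choose (r+1) : ℂ) := by
    exact_mod_cast congrArg (Nat.cast : ℕ → ℂ) key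
  linear_combination (k':ℂ) * pascal' + key'

lemma Co_zero_of_gt {k : ℤ} {n r : ℕ} (h : n < r) : Co k n r = 0 := by
  simp [Co, Nat.choose_eq_zero_of_lt h]

lemma Co_rec_succ (k : ℤ) (n r : ℕ) :
    Co k (n+1) (r+1) = Co k n r + ((k:ℂ) + n + r + 1) * Co k n (r+1) := by
  rcases lt_or_ge r n with h | h
  · have h1 : r + 1 ≤ n := h
    have e1 : ∏ j ∈ Finset.Ico (r+1) (n+1), ((k:ℂ) + j)
        = (∏ j ∈ Finset.Ico (r+1) n, ((k:ℂ) + j)) * ((k:ℂ) + n) :=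
      Finset.prod_Ico_succ_top h1 _
    have e2 : ∏ j ∈ Finset.Ico r n, ((k:ℂ) + j)
        = ((k:ℂ) + r) * ∏ j ∈ Finset.Ico (r+1) n, ((k:ℂ) + j) :=
      Finset.prod_eq_prod_Ico_succ_bot h _
    simp only [Co, e1, e2]
    linear_combination (∏ j ∈ Finset.Ico (r+1) n, ((k:ℂ) + j)) * choose_aux (k' := (k:ℂ)) n r
  · rcases eq_or_lt_of_le h with h3 | h3
    · subst h3
      rw [Co_self, Co_self, Co_zero_of_gt (by omega)]
      ring
    · rw [Co_zero_of_gt (by omega), Co_zero_of_gt (by omega), Co_zero_of_gt (by omega)]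
      ring

lemma raiseIter_eq (k : ℤ) (h : ℂ → ℂ) (hsm : ContDiff ℝ (⊤ : ℕ∞) h) :
    ∀ n : ℕ, ∀ z : ℂ, 0 < z.im →
      raiseIter k n h z = ∑ r ∈ Finset.range (n+1),
        Co k n r * (((z.im:ℂ))⁻¹ ^ (n - r) * dd^[r] h z) := by
  intro n
  induction n with
  | zero => intro z hz; simp [raiseIter, Co]
  | succ n ih =>
    intro z hz
    have hzne : z.im ≠ 0 := ne_of_gt hz
    have hgd : ∀ r : ℕ, DifferentiableAt ℝ (dd^[r] h) z :=
      fun r => ((contDiff_dd_iter hsm r).differentiable (by simp)).differentiableAt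
    have hdiff : ∀ r ∈ Finset.range (n+1), DifferentiableAt ℝ
        (fun w => Co k n r * (((w.im:ℂ))⁻¹ ^ (n - r) * dd^[r] h w)) z :=
      fun r _ => (((differentiableAt_invpow (n-r) hzne).mul (hgd r))).const_mul _
    have hevent : raiseIter k n h =ᶠ[nhds z] (fun w => ∑ r ∈ Finset.range (n+1),
        Co k n r * (((w.im:ℂ))⁻¹ ^ (n - r) * dd^[r] h w)) := by
      have hopen : IsOpen {w : ℂ | 0 < w.im} := isOpen_lt continuous_const Complex.continuous_im
      filter_upwards [hopen.mem_nhds hz] with w hw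
      exact ih w hw
    have hstep : raiseIter k (n+1) h z
        = 2 * Complex.I * dtau (raiseIter k n h) z
          + ((k : ℂ) + 2*n) * (z.im:ℂ)⁻¹ * raiseIter k n h z := by
      show raise (k + 2*n) (raiseIter k n h) z = _
      unfold raise
      push_cast
      ring
    rw [hstep, dtau_congr hevent, ih z hz, dtau_sum hdiff]
    have hterm : ∀ r ∈ Finset.range (n+1),
        dtau (fun w => Co k n r * (((w.im:ℂ))⁻¹ ^ (n - r) * dd^[r] h w)) z
          = Co k n r * ((Complex.I * ((n:ℂ)-(r:ℂ)) / 2 * ((z.im:ℂ))⁻¹ ^ (n - r + 1)) * dd^[r] h z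
              + ((z.im:ℂ))⁻¹ ^ (n - r) * dtau (dd^[r] h) z) := by
      intro r hr
      have hr' : r ≤ n := by simpa using Nat.lt_succ_iff.mp (Finset.mem_range.mp hr)
      rw [dtau_const_mul (g := fun w => ((w.im:ℂ))⁻¹ ^ (n - r) * dd^[r] h w) _
          ((differentiableAt_invpow (n-r) hzne).mul (hgd r)),
        dtau_mul (differentiableAt_invpow (n-r) hzne) (hgd r), dtau_invpow (n-r) hzne]
      rw [Nat.cast_sub hr']
    rw [Finset.sum_congr rfl hterm]
    -- now pure algebra
    set w : ℂ := ((z.im:ℂ))⁻¹ with hw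
    set g : ℕ → ℂ := fun r => dd^[r] h z with hg
    have hgsucc : ∀ r, g (r+1) = 2 * Complex.I * dtau (dd^[r] h) z := by
      intro r
      show dd^[r+1] h z = _
      rw [Function.iterate_succ_apply']
      rfl
    -- LHS as a single sum
    have key : ∀ r ∈ Finset.range (n+1),
        2 * Complex.I * (Co k n r * ((Complex.I * ((n:ℂ)-(r:ℂ)) / 2 * w ^ (n - r + 1)) * g r
              + w ^ (n - r) * dtau (dd^[r] h) z))
          + ((k : ℂ) + 2*n) * w * (Co k n r * (w ^ (n-r) * g r))
        = Co k n r * ((k:ℂ) + n + r) * w ^ (n + 1 - r) * g r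
          + Co k n r * w ^ (n - r) * g (r+1) := by
      intro r hr
      have hr' : r ≤ n := Nat.lt_succ_iff.mp (Finset.mem_range.mp hr)
      have e1 : n - r + 1 = n + 1 - r := by omega
      have e2 : w * w ^ (n - r) = w ^ (n + 1 - r) := by
        rw [← pow_succ', show n - r + 1 = n + 1 - r by omega]
      rw [hgsucc r, ← e2]
      have hI : Complex.I * Complex.I = -1 := Complex.I_mul_I
      linear_combination (((n:ℂ)-(r:ℂ)) * w ^ (n-r+1) * g r * Co k n r) * hI
    rw [Finset.mul_sum, Finset.mul_sum, ← Finset.sum_add_distrib, Finset.sum_congr rfl key,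
      Finset.sum_add_distrib]
    rw [Finset.sum_range_succ' (fun r => Co k (n+1) r * (w^(n+1-r) * g r)) (n+1)]
    rw [Finset.sum_range_succ' (fun r => Co k n r * ((k:ℂ)+(n:ℂ)+(r:ℂ)) * w^(n+1-r) * g r) n]
    have hf0 : Co k (n+1) 0 * (w^(n+1-0) * g 0)
        = Co k n 0 * ((k:ℂ)+(n:ℂ)+(0:ℕ)) * w^(n+1-0) * g 0 := by
      rw [Co_rec_zero]; push_cast; ring
    have hsplit : ∑ i ∈ Finset.range (n+1), Co k (n+1) (i+1) * (w^(n+1-(i+1)) * g (i+1))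
        = ∑ i ∈ Finset.range (n+1), Co k n i * w^(n-i) * g (i+1)
          + ∑ i ∈ Finset.range (n+1), ((k:ℂ)+(n:ℂ)+(i:ℂ)+1) * Co k n (i+1) * w^(n-i) * g (i+1) := by
      rw [← Finset.sum_add_distrib]
      refine Finset.sum_congr rfl fun i hi => ?_
      rw [Co_rec_succ, Nat.succ_sub_succ]
      ring
    have hlast : ∑ i ∈ Finset.range (n+1), ((k:ℂ)+(n:ℂ)+(i:ℂ)+1) * Co k n (i+1) * w^(n-i) * g (i+1)
        = ∑ i ∈ Finset.range n, Co k n (i+1) * ((k:ℂ)+(n:ℂ)+((i+1:ℕ):ℂ)) * w^(n+1-(i+1)) * g (i+1) := by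
      rw [Finset.sum_range_succ, Co_zero_of_gt (Nat.lt_succ_self n)]
      simp only [mul_zero, zero_mul, add_zero]
      refine Finset.sum_congr rfl fun i _ => ?_
      simp only [Nat.succ_sub_succ]
      push_cast
      ring
    rw [hf0, hsplit, hlast]
    ring

lemma Dop_iter (h : ℂ → ℂ) (hsm : ContDiff ℝ (⊤ : ℕ∞) h) (m : ℕ) :
    Dop^[m] h = fun z => ((-4*(π:ℂ))⁻¹)^m * dd^[m] h z := by
  have hgd : ∀ (r : ℕ) (z : ℂ), DifferentiableAt ℝ (dd^[r] h) z := fun r _ =>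
    ((contDiff_dd_iter hsm r).differentiable (by simp)).differentiableAt
  induction m with
  | zero => funext z; simp
  | succ m ih =>
    funext z
    rw [Function.iterate_succ_apply', ih, Function.iterate_succ_apply']
    show Dop (fun z => ((-4*(π:ℂ))⁻¹)^m * dd^[m] h z) z = _
    unfold Dop
    rw [dtau_const_mul _ (hgd m z)]
    show _ = ((-4*(π:ℂ))⁻¹)^(m+1) * (2 * Complex.I * dtau (dd^[m] h) z)
    have hI : Complex.I * Complex.I = -1 := Complex.I_mul_I
    have hπ : (π:ℂ) ≠ 0 := by exact_mod_cast Real.pi_ne_zero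
    have hIne : Complex.I ≠ 0 := Complex.I_ne_zero
    have hc : (1 / (2 * (π:ℂ) * Complex.I)) = (-4*(π:ℂ))⁻¹ * (2 * Complex.I) := by
      field_simp
      linear_combination (4:ℂ) * hI
    rw [hc, pow_succ]
    ring

/-- **Bol's identity.** For an integer `k ≤ 0` and any smooth
function `h`, on the upper half plane one has
`D^{1−k} h = (−4π)^{k−1} R_k^{1−k} h`. -/
theorem bol_identity (k : ℤ) (hk : k ≤ 0) (h : ℂ → ℂ) (hsm : ContDiff ℝ (⊤ : ℕ∞) h) :
    ∀ z : ℂ, 0 < z.im →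
      Dop^[(1 - k).toNat] h z =
        ((-4 * (π : ℂ)) ^ (k - 1)) * raiseIter k (1 - k).toNat h z := by

  intro z hz
  set n : ℕ := (1 - k).toNat with hn
  have hnk : (n : ℤ) = 1 - k := Int.toNat_of_nonneg (by omega)
  have hn1 : 1 ≤ n := by omega
  have hcollapse : raiseIter k n h z = dd^[n] h z := by
    rw [raiseIter_eq k h hsm n z hz]
    rw [Finset.sum_eq_single_of_mem n (Finset.self_mem_range_succ n)]
    · rw [Co_self]; simp
    · intro r hr hrne
      have hrlt : r < n := by
        have := Finset.mem_range.mp hr; omega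
      have hmem : n - 1 ∈ Finset.Ico r n := by
        simp only [Finset.mem_Ico]; omega
      have hzero : ((k:ℂ) + ((n-1 : ℕ):ℂ)) = 0 := by
        have : ((n-1:ℕ):ℤ) = -k := by omega
        have : ((n-1:ℕ):ℂ) = -(k:ℂ) := by exact_mod_cast congrArg (Int.cast : ℤ → ℂ) this
        rw [this]; ring
      have : Co k n r = 0 := by
        unfold Co
        rw [Finset.prod_eq_zero hmem hzero, mul_zero]
      rw [this]; ring
  have hpow : ((-4 * (π : ℂ)) ^ (k - 1)) = ((-4*(π:ℂ))⁻¹)^n := by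
    have hne : (-4 * (π:ℂ)) ≠ 0 := by
      simp [Complex.ofReal_ne_zero, Real.pi_ne_zero]
    have e : k - 1 = -(n:ℤ) := by omega
    rw [e, zpow_neg, zpow_natCast, inv_pow]
  rw [Dop_iter h hsm n, hcollapse, hpow]
end

section
/- Let k ≤ 0 be an integer and n ≠ 0 a real number. For the function φ(τ) = Γ(1−k, 4π|n|y) e^{2πinτ} with n < 0 (where τ = x+iy and Γ(a,y) is the incomplete Gamma function), one has D^{1−k} φ = 0, where D^{1−k} is computed via Bol's identity as (−4π)^{k−1} times the (1−k)-fold iterated raising operator R_k^{1−k}. -/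
open Complex Real

/-- The upper incomplete Gamma function `Γ(a, y) = ∫_y^∞ e^{−t} t^{a−1} dt`. -/
noncomputable def incGamma (a y : ℝ) : ℝ :=
  ∫ t in Set.Ioi y, Real.exp (-t) * t ^ (a - 1)

/-!
Write `k = -N`. Since `Γ(N+1, u) = N! e^{-u} ∑_{s ≤ N} u^s / s!` and, for `n < 0`,
`e^{-4π|n|y} e^{2πinτ} = e^{2πin τ̄}`, the function `φ` is a polynomial of degree `≤ N` in `y`
times an antiholomorphic function. On such products `R_ℓ` acts on the `y`-profile as
`g ↦ g' + ℓ g / y`, so `R_k^m y^s = (s+k)(s+k+1)⋯(s+k+m-1) y^{s-m}`. For `m = N + 1` and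
`0 ≤ s ≤ N` the factor `s + k + (N - s)` vanishes.
-/

open Finset Filter Topology MeasureTheory
open scoped Nat
open ComplexConjugate

noncomputable def expPartialSum (N : ℕ) (t : ℝ) : ℝ :=
  ∑ s ∈ range (N + 1), t ^ s / s !

theorem hasDerivAt_expPartialSum (N : ℕ) (t : ℝ) :
    HasDerivAt (expPartialSum N) (expPartialSum N t - t ^ N / N !) t := by
  induction N with
  | zero =>
    have h0 : expPartialSum 0 = fun _ => 1 := by ext; simp [expPartialSum]
    rw [h0]
    exact (hasDerivAt_const t 1).congr_deriv (by simp)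
  | succ N ih =>
    have hsplit :
        expPartialSum (N + 1) = fun t => expPartialSum N t + t ^ (N + 1) / (N + 1)! := by
      ext t; simp only [expPartialSum, sum_range_succ _ (N + 1)]
    rw [hsplit]
    refine (ih.add ((hasDerivAt_pow (N + 1) t).div_const ((N + 1)! : ℝ))).congr_deriv ?_
    rw [Nat.factorial_succ, Nat.add_sub_cancel]
    push_cast
    field_simp
    ring

theorem hasDerivAt_exp_neg_mul_expPartialSum (N : ℕ) (t : ℝ) :
    HasDerivAt (fun t => -(N ! * (Real.exp (-t) * expPartialSum N t)))
      (Real.exp (-t) * t ^ N) t := by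
  have hexp : HasDerivAt (fun t => Real.exp (-t)) (-Real.exp (-t)) t := by
    simpa using (hasDerivAt_neg t).exp
  refine ((hexp.mul (hasDerivAt_expPartialSum N t)).const_mul (N ! : ℝ)).neg.congr_deriv ?_
  field_simp
  ring

theorem integrableOn_exp_neg_mul_pow_Ioi (N : ℕ) (u : ℝ) :
    IntegrableOn (fun t => Real.exp (-t) * t ^ N) (Set.Ioi u) := by
  refine integrable_of_isBigO_exp_neg one_half_pos (by fun_prop) ?_
  simpa only [Real.rpow_natCast] using (Real.Gamma_integrand_isLittleO N).isBigO

theorem tendsto_exp_neg_mul_expPartialSum (N : ℕ) :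
    Tendsto (fun t => Real.exp (-t) * expPartialSum N t) atTop (𝓝 0) := by
  have h := tendsto_finsetSum (range (N + 1)) fun s _ =>
    (Real.tendsto_pow_mul_exp_neg_atTop_nhds_zero s).div_const (s ! : ℝ)
  simp only [zero_div, sum_const_zero] at h
  refine h.congr fun t => ?_
  simp only [expPartialSum, mul_sum]
  exact sum_congr rfl fun s _ => by ring

theorem incGamma_natCast_add_one (N : ℕ) (u : ℝ) :
    incGamma (N + 1) u = N ! * Real.exp (-u) * expPartialSum N u := by
  have h := integral_Ioi_of_hasDerivAt_of_tendsto'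
    (fun t _ => hasDerivAt_exp_neg_mul_expPartialSum N t) (integrableOn_exp_neg_mul_pow_Ioi N u)
    (by simpa using ((tendsto_exp_neg_mul_expPartialSum N).const_mul (N ! : ℝ)).neg)
  simp only [incGamma, add_sub_cancel_right, Real.rpow_natCast, h]
  ring

theorem raise_congr_of_eventuallyEq {f g : ℂ → ℂ} {z : ℂ} (h : f =ᶠ[𝓝 z] g) (ℓ : ℤ) :
    raise ℓ f z = raise ℓ g z := by
  simp only [raise, dtau, h.fderiv_eq, h.eq_of_nhds]

theorem dtau_im_mul_exp_conj {g : ℝ → ℂ} {g' : ℂ} {z : ℂ} (hg : HasDerivAt g g' z.im) (c : ℂ) :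
    dtau (fun w => g w.im * Complex.exp (c * conj w)) z =
      -(I / 2) * g' * Complex.exp (c * conj z) := by
  have hprofile : HasFDerivAt (fun w : ℂ => g w.im) _ z :=
    hg.hasFDerivAt.comp z Complex.imCLM.hasFDerivAt
  have hexp : HasFDerivAt (fun w => Complex.exp (c * conj w)) _ z :=
    (Complex.hasDerivAt_exp _).comp_hasFDerivAt z
      (Complex.conjCLE.toContinuousLinearMap.hasFDerivAt.const_mul c)
  rw [dtau, (hprofile.fun_mul hexp).fderiv]
  simp only [add_apply, smul_apply,
    ContinuousLinearMap.comp_apply, ContinuousLinearMap.toSpanSingleton_apply,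
    ContinuousLinearEquiv.coe_coe, ContinuousAlgEquiv.coeCLE_apply, Complex.conjCAE_apply,
    Complex.imCLM_apply, Complex.one_im, Complex.I_im, Complex.conj_I, map_one, smul_eq_mul,
    one_div, mul_one, mul_zero, add_zero, zero_smul, one_smul, mul_neg, neg_mul]
  linear_combination (g z.im * Complex.exp (c * conj z) * c / 2) * I_sq

theorem raise_eq_of_eqOn {f : ℂ → ℂ} {g : ℝ → ℂ} {g' c z : ℂ}
    (hf : Set.EqOn f (fun w => g w.im * Complex.exp (c * conj w)) {w | 0 < w.im})
    (hz : 0 < z.im) (hg : HasDerivAt g g' z.im) (ℓ : ℤ) :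
    raise ℓ f z = (g' + ℓ * (z.im : ℂ)⁻¹ * g z.im) * Complex.exp (c * conj z) := by
  have hnhds : {w : ℂ | 0 < w.im} ∈ 𝓝 z :=
    (isOpen_lt continuous_const Complex.continuous_im).mem_nhds hz
  rw [raise_congr_of_eventuallyEq (hf.eventuallyEq_of_mem hnhds), raise,
    dtau_im_mul_exp_conj hg]
  linear_combination (-g' * Complex.exp (c * conj z)) * I_sq

section Profile

variable (k : ℤ) (S : Finset ℕ) (b : ℕ → ℂ)

noncomputable def raiseIterProfile (m : ℕ) (y : ℝ) : ℂ :=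
  ∑ s ∈ S, b s * (ascPochhammer ℂ m).eval ((s : ℂ) + k) * (y : ℂ) ^ ((s : ℤ) - m)

theorem raiseIterProfile_zero (y : ℝ) :
    raiseIterProfile k S b 0 y = ∑ s ∈ S, b s * (y : ℂ) ^ s := by
  simp [raiseIterProfile]

theorem hasDerivAt_raiseIterProfile (m : ℕ) {y : ℝ} (hy : y ≠ 0) :
    HasDerivAt (raiseIterProfile k S b m)
      (raiseIterProfile k S b (m + 1) y -
        (k + 2 * m : ℤ) * (y : ℂ)⁻¹ * raiseIterProfile k S b m y) y := by
  have hy' : (y : ℂ) ≠ 0 := by exact_mod_cast hy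
  refine (HasDerivAt.fun_sum fun (s : ℕ) _ =>
    ((hasDerivAt_zpow ((s : ℤ) - m) (y : ℂ) (Or.inl hy')).comp_ofReal).const_mul
      (b s * (ascPochhammer ℂ m).eval ((s : ℂ) + k))).congr_deriv ?_
  simp only [raiseIterProfile, mul_sum, ← sum_sub_distrib]
  refine sum_congr rfl fun s _ => ?_
  rw [ascPochhammer_succ_eval, Nat.cast_succ, ← sub_sub, zpow_sub_one₀ hy']
  push_cast
  ring

theorem raiseIter_eqOn_raiseIterProfile {c : ℂ} {f : ℂ → ℂ}
    (hf : Set.EqOn f (fun w => (∑ s ∈ S, b s * (w.im : ℂ) ^ s) * Complex.exp (c * conj w))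
      {w | 0 < w.im}) (m : ℕ) :
    Set.EqOn (raiseIter k m f)
      (fun w => raiseIterProfile k S b m w.im * Complex.exp (c * conj w)) {w | 0 < w.im} := by
  induction m with
  | zero => simpa only [raiseIter, raiseIterProfile_zero] using hf
  | succ m ih =>
    intro w hw
    rw [raiseIter, raise_eq_of_eqOn ih hw (hasDerivAt_raiseIterProfile k S b m hw.ne'),
      sub_add_cancel]

theorem raiseIterProfile_eq_zero {N : ℕ} (hS : ∀ s ∈ S, s ≤ N) (y : ℝ) :
    raiseIterProfile (-N) S b (N + 1) y = 0 := by
  refine sum_eq_zero fun s hs => ?_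
  have hroot : (s : ℂ) + ((-N : ℤ) : ℂ) = -((N - s : ℕ) : ℂ) := by
    push_cast [Nat.cast_sub (hS s hs)]
    ring
  rw [hroot, ascPochhammer_eval_neg_coe_nat_of_lt (by omega), mul_zero, zero_mul]

end Profile

theorem raiseIter_neg_succ_eqOn_zero {N : ℕ} {S : Finset ℕ} (hS : ∀ s ∈ S, s ≤ N)
    (b : ℕ → ℂ) {c : ℂ} {f : ℂ → ℂ}
    (hf : Set.EqOn f (fun w => (∑ s ∈ S, b s * (w.im : ℂ) ^ s) * Complex.exp (c * conj w))
      {w | 0 < w.im}) :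
    Set.EqOn (raiseIter (-N) (N + 1) f) 0 {w | 0 < w.im} := fun w hw => by
  rw [raiseIter_eqOn_raiseIterProfile (-N) S b hf (N + 1) hw]
  simp only [raiseIterProfile_eq_zero S b hS, zero_mul, Pi.zero_apply]

theorem incGamma_mul_exp_eq_sum_mul_exp_conj (N : ℕ) {n : ℝ} (hn : n < 0) (w : ℂ) :
    (incGamma (N + 1) (4 * π * |n| * w.im) : ℂ) * Complex.exp (2 * π * I * n * w) =
      (∑ s ∈ range (N + 1), (N ! * (4 * π * |n|) ^ s / s ! : ℂ) * (w.im : ℂ) ^ s) *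
        Complex.exp (2 * π * I * n * conj w) := by
  have hexp : Complex.exp (-(4 * π * |n| * w.im : ℝ)) * Complex.exp (2 * π * I * n * w) =
      Complex.exp (2 * π * I * n * conj w) := by
    have hsc := Complex.sub_conj w
    rw [← Complex.exp_add, abs_of_neg hn]
    congr 1
    push_cast at hsc ⊢
    linear_combination (2 * π * I * n) * hsc + (4 * π * n * w.im : ℂ) * I_sq
  rw [incGamma_natCast_add_one, expPartialSum, ← hexp]
  push_cast
  simp only [mul_sum, sum_mul]
  refine sum_congr rfl fun s _ => ?_
  ring

/-- For an integer `k ≤ 0` and a real number `n < 0`, Bol's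
operator `D^{1−k} = (−4π)^{k−1} R_k^{1−k}` annihilates the non-holomorphic term
`φ(τ) = Γ(1−k, 4π|n|y) e^{2πinτ}` on the upper half plane. -/
theorem bol_annihilates_nonholomorphic_part (k : ℤ) (hk : k ≤ 0)
    (n : ℝ) (hn : n < 0) :
    ∀ z : ℂ, 0 < z.im →
      ((-4 * (π : ℂ)) ^ (k - 1)) *
        raiseIter k (1 - k).toNat
          (fun w : ℂ =>
            (incGamma (1 - k) (4 * π * |n| * w.im) : ℂ) *
              Complex.exp (2 * π * Complex.I * n * w)) z = 0 := by
  intro z hz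
  obtain ⟨N, rfl⟩ := Int.exists_eq_neg_ofNat hk
  have hiter : (1 - -(N : ℤ)).toNat = N + 1 := by omega
  have hweight : (1 : ℝ) - ((-(N : ℤ) : ℤ) : ℝ) = N + 1 := by push_cast; ring
  have hdeg : ∀ s ∈ range (N + 1), s ≤ N := fun s hs => Nat.lt_succ_iff.mp (mem_range.mp hs)
  rw [hiter, hweight, raiseIter_neg_succ_eqOn_zero hdeg _
    (fun w _ => incGamma_mul_exp_eq_sum_mul_exp_conj N hn w) hz, Pi.zero_apply, mul_zero]
end
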